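/- Let l₀,…,l₄ be ℂ-linearly independent linear forms in R and let M be the 6×6 skew-symmetric matrix over R with rows (0, l₀, l₁, 0, 0, 0), (−l₀, 0, l₂, 0, 0, 0), (−l₁, −l₂, 0, 0, 0, 0), (0, 0, 0, 0, l₂, l₃), (0, 0, 0, −l₂, 0, l₄), (0, 0, 0, −l₃, −l₄, 0) (type (b)). Then Pf(M) = 0; for every 6×6 skew-symmetric matrix M′ all of whose entries are linear forms there is a unique cubic Φ(M′) ∈ R such that Pf(M + εM′) = ε·Φ(M′) in R[ε]/(ε²); the assignment M′ ↦ Φ(M′) is ℂ-linear from the ℂ-vector space of 6×6 skew-symmetric matrices of linear forms to the ℂ-vector space of cubics; and the ℂ-dimension of the range of Φ equals 27. -/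

import Mathlib

open MvPolynomial Matrix

noncomputable section

/-- The polynomial ring `R = ℂ[x₀,…,x₄]`. -/
abbrev Rp : Type := MvPolynomial (Fin 5) ℂ

/-- The sub-Pfaffian `q_{αβ}(N)` of a `6 × 6` matrix: for `α < β` it is
`N_{ij}N_{kl} − N_{ik}N_{jl} + N_{il}N_{jk}` where `i < j < k < l` are the elements of
`{0,…,5} ∖ {α,β}`. -/
def subPf {A : Type*} [CommRing A] (N : Matrix (Fin 6) (Fin 6) A) (α β : Fin 6) : A :=
  match (List.finRange 6).filter (fun i => decide (i ≠ α) && decide (i ≠ β)) with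
  | [i, j, k, m] => N i j * N k m - N i k * N j m + N i m * N j k
  | _ => 0

/-- The Pfaffian of a `6 × 6` skew-symmetric matrix. -/
def pf {A : Type*} [CommRing A] (N : Matrix (Fin 6) (Fin 6) A) : A :=
  N 0 1 * subPf N 0 1 - N 0 2 * subPf N 0 2 + N 0 3 * subPf N 0 3
    - N 0 4 * subPf N 0 4 + N 0 5 * subPf N 0 5

/-- The matrix `M + ε M'` over `R[ε]/(ε²)`, realised via dual numbers. -/
def jet1 (M M' : Matrix (Fin 6) (Fin 6) Rp) : Matrix (Fin 6) (Fin 6) (DualNumber Rp) :=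
  Matrix.of fun i j =>
    TrivSqZeroExt.inl (M i j) + DualNumber.eps * TrivSqZeroExt.inl (M' i j)

/-- The `ℂ`-vector space of `6 × 6` skew-symmetric matrices all of whose entries are
linear forms. -/
def SkewLin : Submodule ℂ (Matrix (Fin 6) (Fin 6) Rp) where
  carrier := {N | Nᵀ = -N ∧ ∀ i j, (N i j).IsHomogeneous 1}
  add_mem' := by
    rintro a b ⟨ha1, ha2⟩ ⟨hb1, hb2⟩
    exact ⟨by rw [Matrix.transpose_add, ha1, hb1, neg_add],
      fun i j => (ha2 i j).add (hb2 i j)⟩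
  zero_mem' := ⟨by simp, fun i j => by
    simpa using MvPolynomial.isHomogeneous_zero (Fin 5) ℂ 1⟩
  smul_mem' := by
    rintro c a ⟨ha1, ha2⟩
    refine ⟨by rw [Matrix.transpose_smul, ha1, smul_neg], fun i j => ?_⟩
    have h : (c • a) i j = MvPolynomial.C c * a i j := by
      simp [Matrix.smul_apply, MvPolynomial.smul_eq_C_mul]
    rw [h]
    exact (ha2 i j).C_mul c

/-- The `ℂ`-vector space of cubic forms in `R`. -/
abbrev Cubics : Submodule ℂ Rp := homogeneousSubmodule (Fin 5) ℂ 3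


section TB
open TrivSqZeroExt

private theorem tb_pf_expand {A : Type*} [CommRing A] (N : Matrix (Fin 6) (Fin 6) A) :
    pf N = N 0 1 * (N 2 3 * N 4 5 - N 2 4 * N 3 5 + N 2 5 * N 3 4)
      - N 0 2 * (N 1 3 * N 4 5 - N 1 4 * N 3 5 + N 1 5 * N 3 4)
      + N 0 3 * (N 1 2 * N 4 5 - N 1 4 * N 2 5 + N 1 5 * N 2 4)
      - N 0 4 * (N 1 2 * N 3 5 - N 1 3 * N 2 5 + N 1 5 * N 2 3)
      + N 0 5 * (N 1 2 * N 3 4 - N 1 3 * N 2 4 + N 1 4 * N 2 3) := rfl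

/-- The derivative of the Pfaffian at the type (b) matrix, in direction `M'`. -/
def Dexp (l : Fin 5 → Rp) (M' : Matrix (Fin 6) (Fin 6) Rp) : Rp :=
    l 2 * l 4 * M' 0 3 - l 2 * l 3 * M' 0 4 + l 2 * l 2 * M' 0 5
  - l 1 * l 4 * M' 1 3 + l 1 * l 3 * M' 1 4 - l 1 * l 2 * M' 1 5
  + l 0 * l 4 * M' 2 3 - l 0 * l 3 * M' 2 4 + l 0 * l 2 * M' 2 5

/-- The matrix of type (b). -/
def Mb (l : Fin 5 → Rp) : Matrix (Fin 6) (Fin 6) Rp :=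
  !![0, l 0, l 1, 0, 0, 0;
     -l 0, 0, l 2, 0, 0, 0;
     -l 1, -l 2, 0, 0, 0, 0;
     0, 0, 0, 0, l 2, l 3;
     0, 0, 0, -l 2, 0, l 4;
     0, 0, 0, -l 3, -l 4, 0]

private theorem tb_key (l : Fin 5 → Rp) (M' : Matrix (Fin 6) (Fin 6) Rp) :
    pf (jet1 (Mb l) M') = DualNumber.eps * TrivSqZeroExt.inl (Dexp l M') := by
  rw [tb_pf_expand]
  simp only [jet1, Matrix.of_apply]
  simp only [show Mb l 0 1 = l 0 from rfl, show Mb l 0 2 = l 1 from rfl,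
    show Mb l 0 3 = 0 from rfl, show Mb l 0 4 = 0 from rfl, show Mb l 0 5 = 0 from rfl,
    show Mb l 1 2 = l 2 from rfl, show Mb l 1 3 = 0 from rfl, show Mb l 1 4 = 0 from rfl,
    show Mb l 1 5 = 0 from rfl, show Mb l 2 3 = 0 from rfl, show Mb l 2 4 = 0 from rfl,
    show Mb l 2 5 = 0 from rfl, show Mb l 3 4 = l 2 from rfl, show Mb l 3 5 = l 3 from rfl,
    show Mb l 4 5 = l 4 from rfl]
  refine TrivSqZeroExt.ext ?_ ?_
  · simp [TrivSqZeroExt.snd_mul]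
    try ring
  · simp [Dexp, TrivSqZeroExt.snd_mul]
    try ring

private theorem tb_pf_zero (l : Fin 5 → Rp) : pf (Mb l) = 0 := by
  rw [tb_pf_expand]
  simp only [show Mb l 0 1 = l 0 from rfl, show Mb l 0 2 = l 1 from rfl,
    show Mb l 0 3 = 0 from rfl, show Mb l 0 4 = 0 from rfl, show Mb l 0 5 = 0 from rfl,
    show Mb l 1 2 = l 2 from rfl, show Mb l 1 3 = 0 from rfl, show Mb l 1 4 = 0 from rfl,
    show Mb l 1 5 = 0 from rfl, show Mb l 2 3 = 0 from rfl, show Mb l 2 4 = 0 from rfl,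
    show Mb l 2 5 = 0 from rfl, show Mb l 3 4 = l 2 from rfl, show Mb l 3 5 = l 3 from rfl,
    show Mb l 4 5 = l 4 from rfl]
  ring

private theorem tb_snd_eps_inl (F : Rp) :
    TrivSqZeroExt.snd (DualNumber.eps * TrivSqZeroExt.inl F : DualNumber Rp) = F := by
  simp [TrivSqZeroExt.snd_mul]

private def triN : ℕ → Fin 5 × Fin 5 × Fin 5
  | 0 => (0,0,2)
  | 1 => (0,0,3)
  | 2 => (0,0,4)
  | 3 => (0,1,2)
  | 4 => (0,1,3)
  | 5 => (0,1,4)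
  | 6 => (0,2,2)
  | 7 => (0,2,3)
  | 8 => (0,2,4)
  | 9 => (0,3,3)
  | 10 => (0,3,4)
  | 11 => (0,4,4)
  | 12 => (1,1,2)
  | 13 => (1,1,3)
  | 14 => (1,1,4)
  | 15 => (1,2,2)
  | 16 => (1,2,3)
  | 17 => (1,2,4)
  | 18 => (1,3,3)
  | 19 => (1,3,4)
  | 20 => (1,4,4)
  | 21 => (2,2,2)
  | 22 => (2,2,3)
  | 23 => (2,2,4)
  | 24 => (2,3,3)
  | 25 => (2,3,4)
  | 26 => (2,4,4)
  | _ => (0,0,0)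

private def tri (n : Fin 27) : Fin 5 × Fin 5 × Fin 5 := triN n.val

private def dd (n : Fin 27) : Fin 5 →₀ ℕ :=
  Finsupp.single (tri n).1 1 + Finsupp.single (tri n).2.1 1 + Finsupp.single (tri n).2.2 1

private def enc (f : Fin 5 →₀ ℕ) : ℕ := f 0 + 5 * f 1 + 25 * f 2 + 125 * f 3 + 625 * f 4

private def encN : ℕ → ℕ
  | 0 => 27
  | 1 => 127
  | 2 => 627
  | 3 => 31
  | 4 => 131
  | 5 => 631
  | 6 => 51
  | 7 => 151
  | 8 => 651
  | 9 => 251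
  | 10 => 751
  | 11 => 1251
  | 12 => 35
  | 13 => 135
  | 14 => 635
  | 15 => 55
  | 16 => 155
  | 17 => 655
  | 18 => 255
  | 19 => 755
  | 20 => 1255
  | 21 => 75
  | 22 => 175
  | 23 => 675
  | 24 => 275
  | 25 => 775
  | 26 => 1275
  | _ => 0

private def encval (n : Fin 27) : ℕ := encN n.val

set_option maxHeartbeats 4000000 in
private lemma tb_encval_inj : Function.Injective encval := by decide

set_option maxHeartbeats 1000000 in
private lemma tb_hval (n : Fin 27) : enc (dd n) = encval n := by
  fin_cases n <;> simp [enc, dd, tri, triN, Finsupp.single_apply, encval, encN]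

private lemma tb_ddinj : Function.Injective dd :=
  fun m n h => tb_encval_inj (by rw [← tb_hval, ← tb_hval, h])

private def hmon (n : Fin 27) : Rp := X (tri n).1 * X (tri n).2.1 * X (tri n).2.2

private lemma tb_hmon_eq (n : Fin 27) : hmon n = monomial (dd n) 1 := by
  simp [hmon, dd, MvPolynomial.X, monomial_mul]

private lemma tb_hli : LinearIndependent ℂ hmon := by
  have h : hmon = (basisMonomials (Fin 5) ℂ) ∘ dd := by
    funext n; rw [tb_hmon_eq]; simp
  rw [h]
  exact (basisMonomials (Fin 5) ℂ).linearIndependent.comp dd tb_ddinj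

private def v3 : Fin 3 → Fin 5 := ![0, 1, 2]
private def w3 : Fin 3 → Fin 5 := ![2, 3, 4]

private def g0 (v : Fin 3 × Fin 3 × Fin 5) : Rp := X (v3 v.1) * X (w3 v.2.1) * X v.2.2

private lemma tb_span_g0 :
    Submodule.span ℂ (Set.range g0) = Submodule.span ℂ (Set.range hmon) := by
  apply le_antisymm
  · rw [Submodule.span_le]
    rintro _ ⟨⟨i, j, k⟩, rfl⟩
    apply Submodule.subset_span
    fin_cases i <;> fin_cases j <;> fin_cases k
    · exact ⟨0, by show (X 0 * X 0 * X 2 : Rp) = X 0 * X 2 * X 0; ring⟩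
    · exact ⟨3, by show (X 0 * X 1 * X 2 : Rp) = X 0 * X 2 * X 1; ring⟩
    · exact ⟨6, by show (X 0 * X 2 * X 2 : Rp) = X 0 * X 2 * X 2; ring⟩
    · exact ⟨7, by show (X 0 * X 2 * X 3 : Rp) = X 0 * X 2 * X 3; ring⟩
    · exact ⟨8, by show (X 0 * X 2 * X 4 : Rp) = X 0 * X 2 * X 4; ring⟩
    · exact ⟨1, by show (X 0 * X 0 * X 3 : Rp) = X 0 * X 3 * X 0; ring⟩
    · exact ⟨4, by show (X 0 * X 1 * X 3 : Rp) = X 0 * X 3 * X 1; ring⟩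
    · exact ⟨7, by show (X 0 * X 2 * X 3 : Rp) = X 0 * X 3 * X 2; ring⟩
    · exact ⟨9, by show (X 0 * X 3 * X 3 : Rp) = X 0 * X 3 * X 3; ring⟩
    · exact ⟨10, by show (X 0 * X 3 * X 4 : Rp) = X 0 * X 3 * X 4; ring⟩
    · exact ⟨2, by show (X 0 * X 0 * X 4 : Rp) = X 0 * X 4 * X 0; ring⟩
    · exact ⟨5, by show (X 0 * X 1 * X 4 : Rp) = X 0 * X 4 * X 1; ring⟩
    · exact ⟨8, by show (X 0 * X 2 * X 4 : Rp) = X 0 * X 4 * X 2; ring⟩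
    · exact ⟨10, by show (X 0 * X 3 * X 4 : Rp) = X 0 * X 4 * X 3; ring⟩
    · exact ⟨11, by show (X 0 * X 4 * X 4 : Rp) = X 0 * X 4 * X 4; ring⟩
    · exact ⟨3, by show (X 0 * X 1 * X 2 : Rp) = X 1 * X 2 * X 0; ring⟩
    · exact ⟨12, by show (X 1 * X 1 * X 2 : Rp) = X 1 * X 2 * X 1; ring⟩
    · exact ⟨15, by show (X 1 * X 2 * X 2 : Rp) = X 1 * X 2 * X 2; ring⟩
    · exact ⟨16, by show (X 1 * X 2 * X 3 : Rp) = X 1 * X 2 * X 3; ring⟩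
    · exact ⟨17, by show (X 1 * X 2 * X 4 : Rp) = X 1 * X 2 * X 4; ring⟩
    · exact ⟨4, by show (X 0 * X 1 * X 3 : Rp) = X 1 * X 3 * X 0; ring⟩
    · exact ⟨13, by show (X 1 * X 1 * X 3 : Rp) = X 1 * X 3 * X 1; ring⟩
    · exact ⟨16, by show (X 1 * X 2 * X 3 : Rp) = X 1 * X 3 * X 2; ring⟩
    · exact ⟨18, by show (X 1 * X 3 * X 3 : Rp) = X 1 * X 3 * X 3; ring⟩
    · exact ⟨19, by show (X 1 * X 3 * X 4 : Rp) = X 1 * X 3 * X 4; ring⟩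
    · exact ⟨5, by show (X 0 * X 1 * X 4 : Rp) = X 1 * X 4 * X 0; ring⟩
    · exact ⟨14, by show (X 1 * X 1 * X 4 : Rp) = X 1 * X 4 * X 1; ring⟩
    · exact ⟨17, by show (X 1 * X 2 * X 4 : Rp) = X 1 * X 4 * X 2; ring⟩
    · exact ⟨19, by show (X 1 * X 3 * X 4 : Rp) = X 1 * X 4 * X 3; ring⟩
    · exact ⟨20, by show (X 1 * X 4 * X 4 : Rp) = X 1 * X 4 * X 4; ring⟩
    · exact ⟨6, by show (X 0 * X 2 * X 2 : Rp) = X 2 * X 2 * X 0; ring⟩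
    · exact ⟨15, by show (X 1 * X 2 * X 2 : Rp) = X 2 * X 2 * X 1; ring⟩
    · exact ⟨21, by show (X 2 * X 2 * X 2 : Rp) = X 2 * X 2 * X 2; ring⟩
    · exact ⟨22, by show (X 2 * X 2 * X 3 : Rp) = X 2 * X 2 * X 3; ring⟩
    · exact ⟨23, by show (X 2 * X 2 * X 4 : Rp) = X 2 * X 2 * X 4; ring⟩
    · exact ⟨7, by show (X 0 * X 2 * X 3 : Rp) = X 2 * X 3 * X 0; ring⟩
    · exact ⟨16, by show (X 1 * X 2 * X 3 : Rp) = X 2 * X 3 * X 1; ring⟩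
    · exact ⟨22, by show (X 2 * X 2 * X 3 : Rp) = X 2 * X 3 * X 2; ring⟩
    · exact ⟨24, by show (X 2 * X 3 * X 3 : Rp) = X 2 * X 3 * X 3; ring⟩
    · exact ⟨25, by show (X 2 * X 3 * X 4 : Rp) = X 2 * X 3 * X 4; ring⟩
    · exact ⟨8, by show (X 0 * X 2 * X 4 : Rp) = X 2 * X 4 * X 0; ring⟩
    · exact ⟨17, by show (X 1 * X 2 * X 4 : Rp) = X 2 * X 4 * X 1; ring⟩
    · exact ⟨23, by show (X 2 * X 2 * X 4 : Rp) = X 2 * X 4 * X 2; ring⟩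
    · exact ⟨25, by show (X 2 * X 3 * X 4 : Rp) = X 2 * X 4 * X 3; ring⟩
    · exact ⟨26, by show (X 2 * X 4 * X 4 : Rp) = X 2 * X 4 * X 4; ring⟩
  · rw [Submodule.span_le]
    rintro _ ⟨n, rfl⟩
    apply Submodule.subset_span
    fin_cases n
    · exact ⟨(0, 0, 0), by show (X 0 * X 2 * X 0 : Rp) = X 0 * X 0 * X 2; ring⟩
    · exact ⟨(0, 1, 0), by show (X 0 * X 3 * X 0 : Rp) = X 0 * X 0 * X 3; ring⟩
    · exact ⟨(0, 2, 0), by show (X 0 * X 4 * X 0 : Rp) = X 0 * X 0 * X 4; ring⟩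
    · exact ⟨(0, 0, 1), by show (X 0 * X 2 * X 1 : Rp) = X 0 * X 1 * X 2; ring⟩
    · exact ⟨(0, 1, 1), by show (X 0 * X 3 * X 1 : Rp) = X 0 * X 1 * X 3; ring⟩
    · exact ⟨(0, 2, 1), by show (X 0 * X 4 * X 1 : Rp) = X 0 * X 1 * X 4; ring⟩
    · exact ⟨(0, 0, 2), by show (X 0 * X 2 * X 2 : Rp) = X 0 * X 2 * X 2; ring⟩
    · exact ⟨(0, 0, 3), by show (X 0 * X 2 * X 3 : Rp) = X 0 * X 2 * X 3; ring⟩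
    · exact ⟨(0, 0, 4), by show (X 0 * X 2 * X 4 : Rp) = X 0 * X 2 * X 4; ring⟩
    · exact ⟨(0, 1, 3), by show (X 0 * X 3 * X 3 : Rp) = X 0 * X 3 * X 3; ring⟩
    · exact ⟨(0, 1, 4), by show (X 0 * X 3 * X 4 : Rp) = X 0 * X 3 * X 4; ring⟩
    · exact ⟨(0, 2, 4), by show (X 0 * X 4 * X 4 : Rp) = X 0 * X 4 * X 4; ring⟩
    · exact ⟨(1, 0, 1), by show (X 1 * X 2 * X 1 : Rp) = X 1 * X 1 * X 2; ring⟩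
    · exact ⟨(1, 1, 1), by show (X 1 * X 3 * X 1 : Rp) = X 1 * X 1 * X 3; ring⟩
    · exact ⟨(1, 2, 1), by show (X 1 * X 4 * X 1 : Rp) = X 1 * X 1 * X 4; ring⟩
    · exact ⟨(1, 0, 2), by show (X 1 * X 2 * X 2 : Rp) = X 1 * X 2 * X 2; ring⟩
    · exact ⟨(1, 1, 2), by show (X 1 * X 3 * X 2 : Rp) = X 1 * X 2 * X 3; ring⟩
    · exact ⟨(2, 2, 1), by show (X 2 * X 4 * X 1 : Rp) = X 1 * X 2 * X 4; ring⟩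
    · exact ⟨(1, 1, 3), by show (X 1 * X 3 * X 3 : Rp) = X 1 * X 3 * X 3; ring⟩
    · exact ⟨(1, 1, 4), by show (X 1 * X 3 * X 4 : Rp) = X 1 * X 3 * X 4; ring⟩
    · exact ⟨(1, 2, 4), by show (X 1 * X 4 * X 4 : Rp) = X 1 * X 4 * X 4; ring⟩
    · exact ⟨(2, 0, 2), by show (X 2 * X 2 * X 2 : Rp) = X 2 * X 2 * X 2; ring⟩
    · exact ⟨(2, 0, 3), by show (X 2 * X 2 * X 3 : Rp) = X 2 * X 2 * X 3; ring⟩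
    · exact ⟨(2, 0, 4), by show (X 2 * X 2 * X 4 : Rp) = X 2 * X 2 * X 4; ring⟩
    · exact ⟨(2, 1, 3), by show (X 2 * X 3 * X 3 : Rp) = X 2 * X 3 * X 3; ring⟩
    · exact ⟨(2, 1, 4), by show (X 2 * X 3 * X 4 : Rp) = X 2 * X 3 * X 4; ring⟩
    · exact ⟨(2, 2, 4), by show (X 2 * X 4 * X 4 : Rp) = X 2 * X 4 * X 4; ring⟩

private lemma tb_degree_one_single (m : Fin 5 →₀ ℕ) (h : Finsupp.degree m = 1) :
    ∃ j, Finsupp.single j 1 = m := by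
  have hne : m ≠ 0 := by
    rintro rfl
    simp [map_zero] at h
  obtain ⟨j, hj⟩ := Finsupp.support_nonempty_iff.mpr hne
  refine ⟨j, ?_⟩
  have h1 : 1 ≤ m j := Nat.one_le_iff_ne_zero.mpr (Finsupp.mem_support_iff.mp hj)
  rw [Finsupp.degree_apply, ← Finset.add_sum_erase _ _ hj] at h
  have hmj : m j = 1 := by omega
  have hrest : ∑ a ∈ m.support.erase j, m a = 0 := by omega
  ext a
  rcases eq_or_ne a j with rfl | haj
  · simp [Finsupp.single_apply, hmj]
  · rw [Finsupp.single_apply, if_neg (fun hh => haj hh.symm)]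
    by_contra hma
    have ha : a ∈ m.support.erase j :=
      Finset.mem_erase.mpr ⟨haj, Finsupp.mem_support_iff.mpr (fun hz => hma hz.symm)⟩
    have h0 := (Finset.sum_eq_zero_iff.mp hrest) a ha
    exact hma h0.symm

private lemma tb_hom1_decomp (p : Rp) (hp : p.IsHomogeneous 1) :
    p = ∑ j, MvPolynomial.coeff (Finsupp.single j 1) p • X j := by
  apply MvPolynomial.ext
  intro m
  rw [MvPolynomial.coeff_sum]
  simp only [MvPolynomial.coeff_smul, MvPolynomial.coeff_X', smul_eq_mul]
  by_cases hm : ∃ j, Finsupp.single j 1 = m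
  · obtain ⟨j, rfl⟩ := hm
    rw [Finset.sum_eq_single j]
    · simp
    · intro b _ hbj
      rw [if_neg (fun hh => hbj (Finsupp.single_left_injective one_ne_zero hh)), mul_zero]
    · intro hj; exact absurd (Finset.mem_univ j) hj
  · push_neg at hm
    have hdeg : Finsupp.degree m ≠ 1 := fun hd => by
      obtain ⟨j, hj⟩ := tb_degree_one_single m hd
      exact hm j hj
    rw [hp.coeff_eq_zero hdeg]
    refine (Finset.sum_eq_zero fun j _ => ?_).symm
    rw [if_neg (hm j), mul_zero]

private def Amat (l : Fin 5 → Rp) : Matrix (Fin 5) (Fin 5) ℂ :=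
  fun i j => MvPolynomial.coeff (Finsupp.single j 1) (l i)

private lemma tb_l_eq (l : Fin 5 → Rp) (hl : ∀ i, (l i).IsHomogeneous 1) (i : Fin 5) :
    l i = ∑ j, Amat l i j • X j := tb_hom1_decomp _ (hl i)

private lemma tb_A_isUnit (l : Fin 5 → Rp) (hl : ∀ i, (l i).IsHomogeneous 1)
    (hind : LinearIndependent ℂ l) : IsUnit (Amat l) := by
  rw [← Matrix.linearIndependent_rows_iff_isUnit]
  apply LinearIndependent.of_comp (Fintype.linearCombination ℂ (fun j => (X j : Rp)))
  have h : ((Fintype.linearCombination ℂ fun j => (X j : Rp)) ∘ fun i => Amat l i) = l := by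
    funext i
    rw [Function.comp_apply, Fintype.linearCombination_apply]
    exact (tb_l_eq l hl i).symm
  rw [show (Amat l).row = fun i => Amat l i from rfl, h]
  exact hind

private lemma tb_sum_matrix2 (C D : Matrix (Fin 5) (Fin 5) ℂ) (j : Fin 5) :
    ∑ i, C j i • (∑ k, D i k • (X k : Rp)) = ∑ k, (C * D) j k • X k := by
  calc ∑ i, C j i • (∑ k, D i k • (X k : Rp))
      = ∑ i, ∑ k, (C j i * D i k) • (X k : Rp) := by
        refine Finset.sum_congr rfl fun i _ => ?_
        rw [Finset.smul_sum]
        simp [smul_smul]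
    _ = ∑ k, ∑ i, (C j i * D i k) • (X k : Rp) := Finset.sum_comm
    _ = ∑ k, (C * D) j k • X k := by
        refine Finset.sum_congr rfl fun k _ => ?_
        rw [Matrix.mul_apply, Finset.sum_smul]

private lemma tb_sum_matrix (l : Fin 5 → Rp) (hl : ∀ i, (l i).IsHomogeneous 1)
    (C : Matrix (Fin 5) (Fin 5) ℂ) (j : Fin 5) :
    ∑ i, C j i • l i = ∑ k, (C * Amat l) j k • X k := by
  calc ∑ i, C j i • l i = ∑ i, C j i • (∑ k, Amat l i k • (X k : Rp)) :=
        Finset.sum_congr rfl fun i _ => by rw [← tb_l_eq l hl i]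
    _ = ∑ k, (C * Amat l) j k • X k := tb_sum_matrix2 _ _ _

private lemma tb_X_eq (l : Fin 5 → Rp) (hl : ∀ i, (l i).IsHomogeneous 1)
    (hind : LinearIndependent ℂ l) (j : Fin 5) :
    (X j : Rp) = ∑ i, (Amat l)⁻¹ j i • l i := by
  rw [tb_sum_matrix l hl, Matrix.nonsing_inv_mul _ ((Matrix.isUnit_iff_isUnit_det _).mp
    (tb_A_isUnit l hl hind))]
  simp [Matrix.one_apply]

private lemma tb_lin_mem_span (l : Fin 5 → Rp) (hl : ∀ i, (l i).IsHomogeneous 1)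
    (hind : LinearIndependent ℂ l) (p : Rp) (hp : p.IsHomogeneous 1) :
    p ∈ Submodule.span ℂ (Set.range l) := by
  rw [tb_hom1_decomp p hp]
  refine Submodule.sum_mem _ fun j _ => Submodule.smul_mem _ _ ?_
  rw [tb_X_eq l hl hind j]
  exact Submodule.sum_mem _ fun i _ =>
    Submodule.smul_mem _ _ (Submodule.subset_span ⟨i, rfl⟩)

private lemma tb_aeval_inj (l : Fin 5 → Rp) (hl : ∀ i, (l i).IsHomogeneous 1)
    (hind : LinearIndependent ℂ l) :
    Function.Injective (MvPolynomial.aeval l : Rp →ₐ[ℂ] Rp) := by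
  set ψ : Rp →ₐ[ℂ] Rp := MvPolynomial.aeval (fun j => ∑ i, (Amat l)⁻¹ j i • (X i : Rp)) with hψ
  have hcomp : ψ.comp (MvPolynomial.aeval l : Rp →ₐ[ℂ] Rp) = AlgHom.id ℂ Rp := by
    apply MvPolynomial.algHom_ext
    intro i
    rw [AlgHom.comp_apply, MvPolynomial.aeval_X, AlgHom.id_apply, tb_l_eq l hl i, map_sum]
    simp only [_root_.map_smul, MvPolynomial.aeval_X, hψ]
    rw [tb_sum_matrix2, Matrix.mul_nonsing_inv _ ((Matrix.isUnit_iff_isUnit_det _).mp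
      (tb_A_isUnit l hl hind))]
    simp [Matrix.one_apply]
  intro p q h
  have h2 := congrArg ψ h
  have h3 := congrArg (fun f : Rp →ₐ[ℂ] Rp => f p) hcomp
  have h4 := congrArg (fun f : Rp →ₐ[ℂ] Rp => f q) hcomp
  simp only [AlgHom.comp_apply, AlgHom.id_apply] at h3 h4
  rw [h3, h4] at h2
  exact h2

/-- Elementary skew matrix. -/
private def Esk (a b : Fin 6) (p : Rp) : Matrix (Fin 6) (Fin 6) Rp :=
  Matrix.of fun i j => if i = a ∧ j = b then p else if i = b ∧ j = a then -p else 0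

private lemma tb_Esk_mem (a b : Fin 6) (hab : a ≠ b) (p : Rp) (hp : p.IsHomogeneous 1) :
    Esk a b p ∈ SkewLin := by
  constructor
  · funext i j
    simp only [Matrix.transpose_apply, Matrix.neg_apply, Esk, Matrix.of_apply]
    split_ifs <;> simp_all
  · intro i j
    simp only [Esk, Matrix.of_apply]
    split_ifs
    · exact hp
    · exact hp.neg
    · simpa using MvPolynomial.isHomogeneous_zero (Fin 5) ℂ 1

/-- `Dexp` as a linear map. -/
private def lmap (l : Fin 5 → Rp) : Matrix (Fin 6) (Fin 6) Rp →ₗ[ℂ] Rp where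
  toFun := Dexp l
  map_add' x y := by simp only [Dexp, Matrix.add_apply]; ring
  map_smul' c x := by
    simp only [Dexp, Matrix.smul_apply, MvPolynomial.smul_eq_C_mul, RingHom.id_apply]
    ring

private lemma tb_hom3 (l : Fin 5 → Rp) (hl : ∀ i, (l i).IsHomogeneous 1)
    (M' : Matrix (Fin 6) (Fin 6) Rp) (h2 : ∀ i j, (M' i j).IsHomogeneous 1) :
    (Dexp l M').IsHomogeneous 3 := by
  have t : ∀ (a b : Fin 5) (i j : Fin 6), (l a * l b * M' i j).IsHomogeneous 3 :=
    fun a b i j => ((hl a).mul (hl b)).mul (h2 i j)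
  exact ((((((((t 2 4 0 3).sub (t 2 3 0 4)).add (t 2 2 0 5)).sub (t 1 4 1 3)).add
    (t 1 3 1 4)).sub (t 1 2 1 5)).add (t 0 4 2 3)).sub (t 0 3 2 4)).add (t 0 2 2 5)

private def gl (l : Fin 5 → Rp) (v : Fin 3 × Fin 3 × Fin 5) : Rp :=
  l (v3 v.1) * l (w3 v.2.1) * l v.2.2

private lemma tb_termmem (l : Fin 5 → Rp) (hl : ∀ i, (l i).IsHomogeneous 1)
    (hind : LinearIndependent ℂ l) (i j : Fin 3) (p : Rp) (hp : p.IsHomogeneous 1) :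
    l (v3 i) * l (w3 j) * p ∈ Submodule.span ℂ (Set.range (gl l)) := by
  have hp' : p ∈ Submodule.span ℂ (Set.range l) := tb_lin_mem_span l hl hind p hp
  clear hp
  induction hp' using Submodule.span_induction with
  | mem x hx =>
      obtain ⟨k, rfl⟩ := hx
      exact Submodule.subset_span ⟨(i, j, k), rfl⟩
  | zero => simp
  | add x y _ _ hx hy => rw [mul_add]; exact add_mem hx hy
  | smul a x _ hx => rw [mul_smul_comm]; exact Submodule.smul_mem _ _ hx

private lemma tb_range_lmap (l : Fin 5 → Rp) (hl : ∀ i, (l i).IsHomogeneous 1)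
    (hind : LinearIndependent ℂ l) :
    LinearMap.range ((lmap l).comp SkewLin.subtype) = Submodule.span ℂ (Set.range (gl l)) := by
  apply le_antisymm
  · rintro x ⟨⟨M', hsk⟩, rfl⟩
    have h2 : ∀ i j, (M' i j).IsHomogeneous 1 :=
      (hsk : M'ᵀ = -M' ∧ ∀ i j, (M' i j).IsHomogeneous 1).2
    show Dexp l M' ∈ _
    have t : ∀ (i j : Fin 3) (r c : Fin 6),
        l (v3 i) * l (w3 j) * M' r c ∈ Submodule.span ℂ (Set.range (gl l)) :=
      fun i j r c => tb_termmem l hl hind i j (M' r c) (h2 r c)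
    exact add_mem (sub_mem (add_mem (sub_mem (add_mem (sub_mem (add_mem (sub_mem
      (t 2 2 0 3) (t 2 1 0 4)) (t 2 0 0 5)) (t 1 2 1 3)) (t 1 1 1 4)) (t 1 0 1 5))
      (t 0 2 2 3)) (t 0 1 2 4)) (t 0 0 2 5)
  · rw [Submodule.span_le]
    rintro _ ⟨⟨i, j, k⟩, rfl⟩
    rw [SetLike.mem_coe, LinearMap.mem_range]
    fin_cases i <;> fin_cases j
    · exact ⟨⟨Esk 2 5 (l k), tb_Esk_mem 2 5 (by decide) _ (hl k)⟩,
        by simp [lmap, Dexp, Esk, gl, v3, w3]⟩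
    · exact ⟨⟨Esk 2 4 (-(l k)), tb_Esk_mem 2 4 (by decide) _ (hl k).neg⟩,
        by simp [lmap, Dexp, Esk, gl, v3, w3]⟩
    · exact ⟨⟨Esk 2 3 (l k), tb_Esk_mem 2 3 (by decide) _ (hl k)⟩,
        by simp [lmap, Dexp, Esk, gl, v3, w3]⟩
    · exact ⟨⟨Esk 1 5 (-(l k)), tb_Esk_mem 1 5 (by decide) _ (hl k).neg⟩,
        by simp [lmap, Dexp, Esk, gl, v3, w3]⟩
    · exact ⟨⟨Esk 1 4 (l k), tb_Esk_mem 1 4 (by decide) _ (hl k)⟩,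
        by simp [lmap, Dexp, Esk, gl, v3, w3]⟩
    · exact ⟨⟨Esk 1 3 (-(l k)), tb_Esk_mem 1 3 (by decide) _ (hl k).neg⟩,
        by simp [lmap, Dexp, Esk, gl, v3, w3]⟩
    · exact ⟨⟨Esk 0 5 (l k), tb_Esk_mem 0 5 (by decide) _ (hl k)⟩,
        by simp [lmap, Dexp, Esk, gl, v3, w3]⟩
    · exact ⟨⟨Esk 0 4 (-(l k)), tb_Esk_mem 0 4 (by decide) _ (hl k).neg⟩,
        by simp [lmap, Dexp, Esk, gl, v3, w3]⟩
    · exact ⟨⟨Esk 0 3 (l k), tb_Esk_mem 0 3 (by decide) _ (hl k)⟩,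
        by simp [lmap, Dexp, Esk, gl, v3, w3]⟩

end TB

/-- Proposition 2.4 (Table 2), case (b). -/
theorem tangent_space_type_b
    (l : Fin 5 → Rp) (hl : ∀ i, (l i).IsHomogeneous 1) (hind : LinearIndependent ℂ l)
    (M : Matrix (Fin 6) (Fin 6) Rp)
    (hM : M = !![0, l 0, l 1, 0, 0, 0;
                 -l 0, 0, l 2, 0, 0, 0;
                 -l 1, -l 2, 0, 0, 0, 0;
                 0, 0, 0, 0, l 2, l 3;
                 0, 0, 0, -l 2, 0, l 4;
                 0, 0, 0, -l 3, -l 4, 0]) :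
    pf M = 0 ∧
    (∀ M' ∈ SkewLin, ∃! F : Rp, F.IsHomogeneous 3 ∧
      pf (jet1 M M') = DualNumber.eps * TrivSqZeroExt.inl F) ∧
    ∃ Φ : SkewLin →ₗ[ℂ] Cubics,
      (∀ M' : SkewLin,
        pf (jet1 M M'.1) = DualNumber.eps * TrivSqZeroExt.inl (Φ M' : Rp)) ∧
      Module.finrank ℂ (LinearMap.range Φ) = 27 := by
  have hMb : M = Mb l := hM
  subst hMb
  refine ⟨tb_pf_zero l, ?_, ?_⟩
  · intro M' hsk
    have h2 : ∀ i j, (M' i j).IsHomogeneous 1 :=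
      (hsk : M'ᵀ = -M' ∧ ∀ i j, (M' i j).IsHomogeneous 1).2
    refine ⟨Dexp l M', ⟨tb_hom3 l hl M' h2, tb_key l M'⟩, ?_⟩
    rintro F' ⟨_, hF'⟩
    have h := congrArg TrivSqZeroExt.snd (hF'.symm.trans (tb_key l M'))
    rwa [tb_snd_eps_inl, tb_snd_eps_inl] at h
  · set Φ : SkewLin →ₗ[ℂ] Cubics := LinearMap.codRestrict Cubics
      ((lmap l).comp SkewLin.subtype)
      (fun M' => (MvPolynomial.mem_homogeneousSubmodule 3 _).mpr (tb_hom3 l hl M'.1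
        (M'.2 : M'.1ᵀ = -M'.1 ∧ ∀ i j, (M'.1 i j).IsHomogeneous 1).2)) with hPhi
    refine ⟨Φ, fun M' => tb_key l M'.1, ?_⟩
    rw [← Submodule.finrank_map_subtype_eq Cubics]
    have e1 : Submodule.map Cubics.subtype (LinearMap.range Φ)
        = LinearMap.range ((lmap l).comp SkewLin.subtype) := by
      rw [hPhi, ← LinearMap.range_comp, LinearMap.subtype_comp_codRestrict]
    rw [e1, tb_range_lmap l hl hind]
    have e2 : Submodule.map (MvPolynomial.aeval l : Rp →ₐ[ℂ] Rp).toLinearMap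
        (Submodule.span ℂ (Set.range g0)) = Submodule.span ℂ (Set.range (gl l)) := by
      rw [Submodule.map_span]
      congr 1
      rw [← Set.range_comp]
      apply congrArg
      funext v
      simp [g0, gl, Function.comp]
    rw [← e2, ← (Submodule.equivMapOfInjective (MvPolynomial.aeval l : Rp →ₐ[ℂ] Rp).toLinearMap
      (tb_aeval_inj l hl hind) (Submodule.span ℂ (Set.range g0))).finrank_eq,
      tb_span_g0, finrank_span_eq_card tb_hli, Fintype.card_fin]
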